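/- For every k ≥ 1 and ρ the decreasing pattern (k-1)(k-2)...210, the sequence 0 0 1 1 2 2 ... (k-3)(k-3)(k-2)(k-2) · (ρ_1+k-1, ..., ρ_k+k-1) is a ρ-minimal inversion sequence of length 3k-2. Hence the upper bound 3|ρ|-2 on lengths of ρ-minimal inversion sequences is attained for patterns of every length k ≥ 1. -/

import Mathlib

/-- `σ` is an inversion sequence: `σ_i ∈ {0,…,i-1}` (0-indexed: `σ[i] ≤ i`). -/
def IsInvSeq (σ : List ℕ) : Prop := ∀ i < σ.length, σ.getD i 0 ≤ i

/-- `σ` is a Cayley permutation: its value set is `{0,…,max σ}` (downward closed). -/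
def IsCayley (σ : List ℕ) : Prop := ∀ v w : ℕ, w ∈ σ → v ≤ w → v ∈ σ

/-- Maximum diagonal difference `max_i (σ_i - i + 1)` (0-indexed: `max_i (σ[i] - i)`). -/
def mdd (σ : List ℕ) : ℤ :=
  ((List.range σ.length).map (fun i => (σ.getD i 0 : ℤ) - i)).foldr max (-(σ.length : ℤ))

/-- `τ` and `σ` are order-isomorphic sequences of the same length. -/
def OrdIso (τ σ : List ℕ) : Prop :=
  τ.length = σ.length ∧ ∀ i j : ℕ, i < τ.length → j < τ.length →
    (τ.getD i 0 ≤ τ.getD j 0 ↔ σ.getD i 0 ≤ σ.getD j 0)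

/-- `σ` contains the pattern `ρ` (i.e. `ρ ⪯ σ`): some subsequence of `σ` is
order-isomorphic to `ρ`. -/
def ContainsPat (σ ρ : List ℕ) : Prop := ∃ τ : List ℕ, τ.Sublist σ ∧ OrdIso ρ τ

/-- The reduction of `σ`: the `j`-th smallest distinct value is replaced by `j-1`. -/
def red (σ : List ℕ) : List ℕ :=
  σ.map (fun v => (σ.toFinset.filter (fun w => w < v)).card)

/-- Number of distinct values of `σ`. -/
def distv (σ : List ℕ) : ℕ := σ.toFinset.card

/-- Positions (0-indexed) of saturated entries of `σ`. -/
def Sat (σ : List ℕ) : Set ℕ := {i | i < σ.length ∧ (σ.getD i 0 : ℤ) - i = mdd σ}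

/-- `σ` is a ρ-minimal inversion sequence: a minimal element, under pattern
containment, of the set of inversion sequences that are Cayley permutations and
contain `ρ`. -/
def IsMinimalFor (ρ σ : List ℕ) : Prop :=
  IsInvSeq σ ∧ IsCayley σ ∧ ContainsPat σ ρ ∧
  ∀ τ : List ℕ, IsInvSeq τ → IsCayley τ → ContainsPat τ ρ → ContainsPat σ τ → τ = σ

/-!
Write `m = k - 1`, so `σ = D ++ T` with `D = 0 0 1 1 ⋯ (m-1) (m-1)` and `T = 2m (2m-1) ⋯ m`.
Let `τ` be a Cayley inversion sequence containing `ρ`, order-isomorphic to a subsequence `τ'`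
of `σ`. An occurrence of `ρ` in `τ'` is a decreasing run of length `m + 1`; it cannot start
inside `D`, whose entries are `< m`, so it is `T`, and `τ' = p ++ T` with `p` a subsequence
of `D`. The maximum of `τ'` sits at position `|p|`, so the inversion sequence `τ` has at most
`|p| + 1` distinct values, while it has `d + m + 1` of them, `d` being the number of distinct
values of `p`. As every value occurs at most twice in `D`, `d + m ≤ |p| ≤ 2d ≤ 2m`, whence
`p = D`; finally, order-isomorphic Cayley permutations are equal.
-/

theorem List.toFinset_map {α β : Type*} [DecidableEq α] [DecidableEq β] (f : α → β)
    (l : List α) : (l.map f).toFinset = l.toFinset.image f := by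
  ext; simp

theorem List.getD_reverse_range {n i : ℕ} (hi : i < n) :
    (List.range n).reverse.getD i 0 = n - 1 - i := by
  simp [List.getElem_reverse, hi]

theorem List.length_le_of_pairwise_gt_cons {x : ℕ} {l : List ℕ}
    (h : (x :: l).Pairwise (· > ·)) : l.length ≤ x := by
  obtain ⟨hx, hl⟩ := List.pairwise_cons.1 h
  have hsub : l.toFinset ⊆ Finset.range x := fun y hy =>
    Finset.mem_range.2 (hx y (List.mem_toFinset.1 hy))
  simpa [List.toFinset_card_of_nodup hl.nodup] using Finset.card_le_card hsub

theorem List.length_le_mul_card_toFinset {l : List ℕ} {c : ℕ} (h : ∀ v, l.count v ≤ c) :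
    l.length ≤ c * l.toFinset.card := by
  calc l.length = ∑ v ∈ l.toFinset, l.count v := by simp
    _ ≤ l.toFinset.card • c := Finset.sum_le_card_nsmul _ _ _ fun v _ => h v
    _ = c * l.toFinset.card := by rw [smul_eq_mul, mul_comm]

theorem List.exists_eq_append_of_sublist_append {A B τ : List ℕ} (hAB : A.Disjoint B)
    (hτ : τ.Sublist (A ++ B)) (hB : B.Sublist τ) : ∃ p, p.Sublist A ∧ τ = p ++ B := by
  obtain ⟨p, s, rfl, hp, hs⟩ := List.sublist_append_iff.1 hτ
  obtain ⟨p', s', hB', hp', hs'⟩ := List.sublist_append_iff.1 hB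
  have hp'nil : p' = [] := List.eq_nil_iff_forall_not_mem.2 fun x hx =>
    hAB (hp.subset (hp'.subset hx)) (hB' ▸ List.mem_append_left _ hx)
  subst hp'nil
  exact ⟨p, hp, by rw [hs.antisymm (hB' ▸ hs')]⟩

theorem IsCayley.red_eq {l : List ℕ} (hl : IsCayley l) : red l = l := by
  refine List.map_congr_left (fun v hv => ?_) |>.trans (List.map_id l)
  have : l.toFinset.filter (· < v) = Finset.range v := by
    ext w
    simp only [Finset.mem_filter, List.mem_toFinset, Finset.mem_range, and_iff_right_iff_imp]
    exact fun hw => hl w v hv hw.le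
  rw [this, Finset.card_range, id]

theorem ordIso_iff_zip {a b : List ℕ} :
    OrdIso a b ↔ a.length = b.length ∧
      ∀ p ∈ a.zip b, ∀ q ∈ a.zip b, (p.1 ≤ q.1 ↔ p.2 ≤ q.2) := by
  refine and_congr_right fun hlen => ⟨fun h p hp q hq => ?_, fun h i j hi hj => ?_⟩
  · obtain ⟨i, hi, rfl⟩ := List.mem_iff_getElem.1 hp
    obtain ⟨j, hj, rfl⟩ := List.mem_iff_getElem.1 hq
    simp only [List.length_zip, lt_min_iff] at hi hj
    simpa [List.getD_eq_getElem, hi, hj] using h i j hi.1 hj.1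
  · have hmem : ∀ n (hn : n < a.length), (a.getD n 0, b.getD n 0) ∈ a.zip b := fun n hn => by
      rw [List.getD_eq_getElem _ _ hn, List.getD_eq_getElem _ _ (hlen ▸ hn)]
      exact List.mem_iff_getElem.2 ⟨n, by simp [hn, ← hlen], by simp⟩
    exact h _ (hmem i hi) _ (hmem j hj)

namespace OrdIso

variable {a b c : List ℕ}

theorem trans (hab : OrdIso a b) (hbc : OrdIso b c) : OrdIso a c :=
  ⟨hab.1.trans hbc.1, fun i j hi hj =>
    (hab.2 i j hi hj).trans (hbc.2 i j (hab.1 ▸ hi) (hab.1 ▸ hj))⟩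

theorem exists_sublist (h : OrdIso a b) {u : List ℕ} (hu : u.Sublist a) :
    ∃ u', u'.Sublist b ∧ OrdIso u u' := by
  obtain ⟨hlen, hzip⟩ := ordIso_iff_zip.1 h
  rw [← List.map_fst_zip hlen.le, List.sublist_map_iff] at hu
  obtain ⟨w, hw, rfl⟩ := hu
  refine ⟨w.map Prod.snd, List.map_snd_zip hlen.ge ▸ hw.map _, ordIso_iff_zip.2 ⟨by simp, ?_⟩⟩
  rw [← List.unzip_fst, ← List.unzip_snd, List.zip_unzip]
  exact fun p hp q hq => hzip p (hw.subset hp) q (hw.subset hq)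

theorem containsPat (h : OrdIso a b) {ρ : List ℕ} (hρ : ContainsPat a ρ) : ContainsPat b ρ := by
  obtain ⟨u, hu, hρu⟩ := hρ
  obtain ⟨u', hu', huu'⟩ := h.exists_sublist hu
  exact ⟨u', hu', hρu.trans huu'⟩

theorem card_image_fst_eq_card_image_snd (h : OrdIso a b) {S : Finset (ℕ × ℕ)}
    (hS : ∀ p ∈ S, p ∈ a.zip b) : (S.image Prod.fst).card = (S.image Prod.snd).card := by
  have hzip := (ordIso_iff_zip.1 h).2
  have hfst : Set.InjOn Prod.fst (S : Set (ℕ × ℕ)) := fun p hp q hq hpq =>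
    Prod.ext hpq <| le_antisymm ((hzip p (hS p hp) q (hS q hq)).1 hpq.le)
      ((hzip q (hS q hq) p (hS p hp)).1 hpq.ge)
  have hsnd : Set.InjOn Prod.snd (S : Set (ℕ × ℕ)) := fun p hp q hq hpq =>
    Prod.ext (le_antisymm ((hzip p (hS p hp) q (hS q hq)).2 hpq.le)
      ((hzip q (hS q hq) p (hS p hp)).2 hpq.ge)) hpq
  rw [Finset.card_image_of_injOn hfst, Finset.card_image_of_injOn hsnd]

theorem card_toFinset (h : OrdIso a b) : a.toFinset.card = b.toFinset.card := by
  conv_lhs => rw [← List.map_fst_zip h.1.le]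
  conv_rhs => rw [← List.map_snd_zip h.1.ge]
  rw [List.toFinset_map, List.toFinset_map]
  exact h.card_image_fst_eq_card_image_snd fun p hp => List.mem_toFinset.1 hp

theorem red_eq (h : OrdIso a b) : red a = red b := by
  obtain ⟨hlen, hzip⟩ := ordIso_iff_zip.1 h
  have hlt : ∀ p ∈ a.zip b, ∀ q ∈ a.zip b, (q.1 < p.1 ↔ q.2 < p.2) := fun p hp q hq => by
    rw [← not_le, ← not_le, hzip p hp q hq]
  rw [red, red]
  conv_lhs => rw [← List.map_fst_zip hlen.le]
  conv_rhs => rw [← List.map_snd_zip hlen.ge]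
  simp only [List.map_map, List.toFinset_map, Finset.filter_image]
  refine List.map_congr_left fun p hp => ?_
  simp only [Function.comp_apply]
  rw [Finset.filter_congr fun q hq => hlt p hp q (List.mem_toFinset.1 hq)]
  exact h.card_image_fst_eq_card_image_snd fun q hq =>
    List.mem_toFinset.1 (Finset.mem_filter.1 hq).1

theorem eq_of_isCayley (h : OrdIso a b) (ha : IsCayley a) (hb : IsCayley b) : a = b := by
  rw [← ha.red_eq, ← hb.red_eq, h.red_eq]

theorem forall_le_getD (h : OrdIso a b) {t : ℕ} (ht : t < a.length)
    (hmax : ∀ v ∈ b, v ≤ b.getD t 0) : ∀ v ∈ a, v ≤ a.getD t 0 := by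
  intro v hv
  obtain ⟨j, hj, rfl⟩ := List.mem_iff_getElem.1 hv
  rw [← List.getD_eq_getElem a 0 hj, h.2 j t hj ht]
  exact hmax _ (List.getD_eq_getElem b 0 (h.1 ▸ hj) ▸ List.getElem_mem _)

end OrdIso

theorem ordIso_map_of_strictMono {f : ℕ → ℕ} (hf : StrictMono f) (l : List ℕ) :
    OrdIso l (l.map f) := by
  refine ⟨(List.length_map f).symm, fun i j hi hj => ?_⟩
  simp only [List.getD_eq_getElem _ _ hi, List.getD_eq_getElem _ _ hj,
    List.getD_eq_getElem _ _ (l.length_map f ▸ hi), List.getD_eq_getElem _ _ (l.length_map f ▸ hj),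
    List.getElem_map, hf.le_iff_le]

theorem pairwise_gt_of_ordIso_reverse_range {n : ℕ} {u : List ℕ}
    (h : OrdIso (List.range n).reverse u) : u.Pairwise (· > ·) := by
  refine List.pairwise_iff_getElem.2 fun i j hi hj hij => ?_
  have hn : u.length = n := by simpa using h.1.symm
  rw [← List.getD_eq_getElem u 0 hi, ← List.getD_eq_getElem u 0 hj, gt_iff_lt, ← not_le,
    ← h.2 i j (by simpa [hn] using hi) (by simpa [hn] using hj),
    List.getD_reverse_range (hn ▸ hi), List.getD_reverse_range (hn ▸ hj)]
  omega

theorem IsInvSeq.card_toFinset_le {τ : List ℕ} (hτ : IsInvSeq τ) {t : ℕ} (ht : t < τ.length)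
    (hmax : ∀ v ∈ τ, v ≤ τ.getD t 0) : τ.toFinset.card ≤ t + 1 := by
  have hsub : τ.toFinset ⊆ Finset.range (τ.getD t 0 + 1) := fun v hv =>
    Finset.mem_range.2 (Nat.lt_succ_of_le (hmax v (List.mem_toFinset.1 hv)))
  simpa using (Finset.card_le_card hsub).trans (by simpa using hτ t ht)

def doubledRange (m : ℕ) : List ℕ := (List.range m).flatMap fun i => [i, i]

def shiftedReverseRange (m : ℕ) : List ℕ := (List.range (m + 1)).reverse.map (· + m)

def extremalSeq (m : ℕ) : List ℕ := doubledRange m ++ shiftedReverseRange m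

section extremal

variable (m : ℕ)

theorem doubledRange_eq_map : doubledRange m = (List.range (2 * m)).map (· / 2) := by
  induction m with
  | zero => rfl
  | succ m ih =>
    rw [doubledRange, List.range_succ, List.flatMap_append, ← doubledRange, ih,
      show 2 * (m + 1) = 2 * m + 1 + 1 by ring, List.range_succ, List.range_succ]
    simp only [List.map_append, List.flatMap_cons, List.flatMap_nil, List.map_cons, List.map_nil,
      List.append_assoc, List.append_nil]
    congr 3 <;> omega

theorem length_doubledRange : (doubledRange m).length = 2 * m := by
  simp [doubledRange_eq_map]

variable {m} in
theorem mem_doubledRange {v : ℕ} : v ∈ doubledRange m ↔ v < m := by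
  simp only [doubledRange_eq_map, List.mem_map, List.mem_range]
  exact ⟨by omega, fun hv => ⟨2 * v, by omega, by omega⟩⟩

theorem count_doubledRange_le (v : ℕ) : (doubledRange m).count v ≤ 2 := by
  induction m with
  | zero => simp [doubledRange]
  | succ m ih =>
    rw [doubledRange, List.range_succ, List.flatMap_append, List.count_append, ← doubledRange]
    by_cases hv : v = m
    · subst hv
      simp [List.count_eq_zero.2 fun h => (mem_doubledRange.1 h).false]
    · simpa [List.count_cons, Ne.symm hv] using ih

theorem length_shiftedReverseRange : (shiftedReverseRange m).length = m + 1 := by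
  simp [shiftedReverseRange]

variable {m} in
theorem mem_shiftedReverseRange {v : ℕ} :
    v ∈ shiftedReverseRange m ↔ m ≤ v ∧ v ≤ 2 * m := by
  simp only [shiftedReverseRange, List.mem_map, List.mem_reverse, List.mem_range]
  exact ⟨by omega, fun hv => ⟨v - m, by omega, by omega⟩⟩

theorem nodup_shiftedReverseRange : (shiftedReverseRange m).Nodup :=
  (List.nodup_reverse.2 List.nodup_range).map (add_left_injective m)

theorem getD_shiftedReverseRange_zero : (shiftedReverseRange m).getD 0 0 = 2 * m := by
  simp [shiftedReverseRange, two_mul]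

theorem disjoint_doubledRange_shiftedReverseRange :
    (doubledRange m).Disjoint (shiftedReverseRange m) := fun _ h₁ h₂ =>
  absurd (mem_shiftedReverseRange.1 h₂).1 (not_le.2 (mem_doubledRange.1 h₁))

variable {m} in
theorem mem_extremalSeq {v : ℕ} : v ∈ extremalSeq m ↔ v ≤ 2 * m := by
  rw [extremalSeq, List.mem_append, mem_doubledRange, mem_shiftedReverseRange]
  omega

theorem length_extremalSeq : (extremalSeq m).length = 3 * m + 1 := by
  rw [extremalSeq, List.length_append, length_doubledRange, length_shiftedReverseRange]
  ring

theorem isInvSeq_extremalSeq : IsInvSeq (extremalSeq m) := by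
  intro i hi
  rw [List.getD_eq_getElem _ _ hi]
  by_cases hiD : i < 2 * m
  · simp only [extremalSeq]
    rw [List.getElem_append_left (by rwa [length_doubledRange])]
    simp only [doubledRange_eq_map, List.getElem_map, List.getElem_range]
    omega
  · exact (mem_extremalSeq.1 (List.getElem_mem hi)).trans (not_lt.1 hiD)

theorem isCayley_extremalSeq : IsCayley (extremalSeq m) := fun _ _ hw hvw =>
  mem_extremalSeq.2 (hvw.trans (mem_extremalSeq.1 hw))

theorem ordIso_reverse_range_shiftedReverseRange :
    OrdIso (List.range (m + 1)).reverse (shiftedReverseRange m) :=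
  ordIso_map_of_strictMono (strictMono_id.add_const m) _

theorem containsPat_extremalSeq : ContainsPat (extremalSeq m) (List.range (m + 1)).reverse :=
  ⟨_, List.sublist_append_right _ _, ordIso_reverse_range_shiftedReverseRange m⟩

end extremal

section minimality

variable {m : ℕ}

theorem eq_shiftedReverseRange_of_sublist {u : List ℕ} (hu : u.Sublist (extremalSeq m))
    (h : OrdIso (List.range (m + 1)).reverse u) : u = shiftedReverseRange m := by
  have hlen : u.length = m + 1 := by simpa using h.1.symm
  obtain ⟨a, b, rfl, ha, hb⟩ := List.sublist_append_iff.1 hu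
  cases a with
  | nil => exact hb.eq_of_length (by simpa [length_shiftedReverseRange] using hlen)
  | cons x a =>
    have hxm : x < m := mem_doubledRange.1 (ha.subset List.mem_cons_self)
    have hmx : (a ++ b).length ≤ x :=
      List.length_le_of_pairwise_gt_cons (pairwise_gt_of_ordIso_reverse_range h)
    simp only [List.cons_append, List.length_cons] at hlen
    omega

theorem eq_doubledRange_of_ordIso {τ p : List ℕ} (hτ : IsInvSeq τ)
    (hp : p.Sublist (doubledRange m)) (h : OrdIso τ (p ++ shiftedReverseRange m)) :
    p = doubledRange m := by
  have hmax : ∀ v ∈ p ++ shiftedReverseRange m,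
      v ≤ (p ++ shiftedReverseRange m).getD p.length 0 := by
    rw [List.getD_append_right _ _ _ _ le_rfl, Nat.sub_self, getD_shiftedReverseRange_zero]
    exact fun v hv => mem_extremalSeq.1 ((hp.append_right _).subset hv)
  have hcard : τ.toFinset.card = p.toFinset.card + (m + 1) := by
    rw [h.card_toFinset, List.toFinset_append, Finset.card_union_of_disjoint,
      List.toFinset_card_of_nodup (nodup_shiftedReverseRange m), length_shiftedReverseRange]
    exact List.disjoint_toFinset_iff_disjoint.2
      (List.disjoint_of_subset_left hp.subset (disjoint_doubledRange_shiftedReverseRange m))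
  have ht : p.length < τ.length := by simp [h.1, length_shiftedReverseRange]
  have hinv := hτ.card_toFinset_le ht (h.forall_le_getD ht hmax)
  have hdbl : p.length ≤ 2 * p.toFinset.card := List.length_le_mul_card_toFinset
    fun v => (hp.count_le v).trans (count_doubledRange_le m v)
  have hd : p.toFinset.card ≤ m := by
    simpa using Finset.card_le_card (s := p.toFinset) (t := Finset.range m) fun v hv =>
      Finset.mem_range.2 (mem_doubledRange.1 (hp.subset (List.mem_toFinset.1 hv)))
  exact hp.eq_of_length (by rw [length_doubledRange]; omega)

end minimality

theorem isMinimalFor_extremalSeq (m : ℕ) :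
    IsMinimalFor (List.range (m + 1)).reverse (extremalSeq m) := by
  refine ⟨isInvSeq_extremalSeq m, isCayley_extremalSeq m, containsPat_extremalSeq m, ?_⟩
  rintro τ hτ hτc hτρ ⟨τ', hτ'σ, hττ'⟩
  obtain ⟨u, hu, hρu⟩ := hττ'.containsPat hτρ
  have hTτ' : (shiftedReverseRange m).Sublist τ' :=
    eq_shiftedReverseRange_of_sublist (hu.trans hτ'σ) hρu ▸ hu
  obtain ⟨p, hp, rfl⟩ := List.exists_eq_append_of_sublist_append
    (disjoint_doubledRange_shiftedReverseRange m) hτ'σ hTτ'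
  obtain rfl := eq_doubledRange_of_ordIso hτ hp hττ'
  exact hττ'.eq_of_isCayley hτc (isCayley_extremalSeq m)

theorem stmt16 (k : ℕ) (hk : 1 ≤ k) (ρ σ : List ℕ)
    (hρ : ρ = (List.range k).reverse)
    (hσ : σ = ((List.range (k - 1)).flatMap fun i => [i, i]) ++
      ((List.range k).reverse.map fun v => v + (k - 1))) :
    IsMinimalFor ρ σ ∧ σ.length = 3 * k - 2 := by
  obtain ⟨m, rfl⟩ : ∃ m, k = m + 1 := ⟨k - 1, by omega⟩
  have hσm : σ = extremalSeq m := by rw [hσ]; rfl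
  subst hρ hσm
  exact ⟨isMinimalFor_extremalSeq m, by rw [length_extremalSeq]; omega⟩
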